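/- Fix g > 0. For a state with fluid depth h > 0 and real parameters u, v, a, b, α, β, γ, η, let U = (h, hu, hv, ha, hb, hα, hβ, hγ, hη) ∈ ℝ⁹, and define the flux map G : {U ∈ ℝ⁹ : U₁ > 0} → ℝ⁹, in conservative variables, whose value at this state is ( hv, huv + (1/3)hαβ − hab − (1/3)hγη, hv² + (1/3)hβ² + (g/2)h² − hb² − (1/3)hη², hav + (1/3)hβγ − hbu − (1/3)hαη, 0, huβ + hvα − haη − hbγ, 2hvβ − 2hbη, haβ + hvγ − hbα − huη, 0 ). Let Q(U) be the 9×9 real matrix whose only nonzero entries are: column 5 given by rows 2–9 as ( −(a−γ), −(b−η), −(u−α), −(v−β), −2γ, −2η, −2α, −2β ), column 7 given by rows 6–9 as ( u, v, a, b ), and column 9 given by rows 6–9 as ( −a, −b, −u, −v ). Let J(U) = DG(U) − Q(U), where DG(U) is the Jacobian matrix of G at U. Then the five real numbers v − β, v − b + (β−η)/√3, v − b − (β−η)/√3, v + b + (β+η)/√3, and v + b − (β+η)/√3 are eigenvalues of J(U), i.e., roots of its characteristic polynomial. -/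

import Mathlib

open Polynomial

/-- The flux of the first-order (M = 1) 1-D magnetic rotating shallow water
moment system in the conservative variables
`V = (h, hu, hv, ha, hb, hα, hβ, hγ, hη)` (0-indexed). -/
noncomputable def mrswme1Flux (g : ℝ) (V : Fin 9 → ℝ) : Fin 9 → ℝ :=
  ![V 2,
    V 1 * V 2 / V 0 + 1 / 3 * (V 5 * V 6 / V 0)
      - V 3 * V 4 / V 0 - 1 / 3 * (V 7 * V 8 / V 0),
    (V 2) ^ 2 / V 0 + 1 / 3 * ((V 6) ^ 2 / V 0) + g / 2 * (V 0) ^ 2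
      - (V 4) ^ 2 / V 0 - 1 / 3 * ((V 8) ^ 2 / V 0),
    V 3 * V 2 / V 0 + 1 / 3 * (V 6 * V 7 / V 0)
      - V 4 * V 1 / V 0 - 1 / 3 * (V 5 * V 8 / V 0),
    0,
    V 1 * V 6 / V 0 + V 2 * V 5 / V 0 - V 3 * V 8 / V 0 - V 4 * V 7 / V 0,
    2 * (V 2 * V 6 / V 0) - 2 * (V 4 * V 8 / V 0),
    V 3 * V 6 / V 0 + V 2 * V 7 / V 0 - V 4 * V 5 / V 0 - V 1 * V 8 / V 0,
    0]

/-- The Jacobian matrix `DG(U)` of the flux at `U`. -/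
noncomputable def mrswme1FluxJacobian (g : ℝ) (U : Fin 9 → ℝ) :
    Matrix (Fin 9) (Fin 9) ℝ :=
  Matrix.of fun i j =>
    deriv (fun s : ℝ => mrswme1Flux g (Function.update U j s) i) (U j)

/-- The nonconservative (Godunov–Powell) matrix `Q(U)` of the first-order
MRSW moment system, with nonzero entries only in columns 5, 7 and 9
(1-indexed). -/
noncomputable def mrswme1GP (u v a b α β γ η : ℝ) :
    Matrix (Fin 9) (Fin 9) ℝ :=
  Matrix.of fun i j =>
    if j = (4 : Fin 9) then
      ![0, -(a - γ), -(b - η), -(u - α), -(v - β),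
        -(2 * γ), -(2 * η), -(2 * α), -(2 * β)] i
    else if j = (6 : Fin 9) then
      ![0, 0, 0, 0, 0, u, v, a, b] i
    else if j = (8 : Fin 9) then
      ![0, 0, 0, 0, 0, -a, -b, -u, -v] i
    else 0

/-!
The row of `J(U)` belonging to `hb` is `v - β` times the corresponding unit row vector: the flux
of `hb` vanishes, so only the Godunov–Powell term contributes.

The coordinates `(hu, ha, hα, hγ)`, transverse to the flux direction, span a `J(U)`-invariant
subspace. Grouping them as (mean, moment) ⊗ (velocity, magnetic field), `J(U)` acts there as
`1 ⊗ (v - b S) + P ⊗ (β - η S)`, where `S` swaps velocity and magnetic field and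
`P = !![0, 1/3; 1, 0]`. As `S (1, ε) = ε (1, ε)` for `ε² = 1` and `P (1, τ) = (τ/3) (1, τ)` for
`τ² = 3`, the vector `(1, ε, τ, ετ)` is an eigenvector with eigenvalue `v - ε b + τ (β - ε η) / 3`,
and `τ = ±√3` gives the other four closed forms.
-/

open Matrix

namespace Matrix

variable {R n : Type*} [CommRing R] [IsDomain R] [Fintype n] [DecidableEq n]
  {A : Matrix n n R} {μ : R} {w : n → R}

theorem isRoot_charpoly_of_mulVec_eq_smul (hw : w ≠ 0) (h : A *ᵥ w = μ • w) :
    A.charpoly.IsRoot μ := by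
  rw [IsRoot.def, eval_charpoly, ← exists_mulVec_eq_zero_iff]
  exact ⟨w, hw, by ext; simp [sub_mulVec, h]⟩

theorem isRoot_charpoly_of_vecMul_eq_smul (hw : w ≠ 0) (h : w ᵥ* A = μ • w) :
    A.charpoly.IsRoot μ := by
  rw [IsRoot.def, eval_charpoly, ← exists_vecMul_eq_zero_iff]
  exact ⟨w, hw, by ext; simp [vecMul_sub, h]⟩

end Matrix

noncomputable abbrev mrswme1QuasilinearMatrix (g h u v a b α β γ η : ℝ) :
    Matrix (Fin 9) (Fin 9) ℝ :=
  mrswme1FluxJacobian g ![h, h * u, h * v, h * a, h * b, h * α, h * β, h * γ, h * η]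
    - mrswme1GP u v a b α β γ η

def mrswme1Transverse (p : Fin 4 → ℝ) : Fin 9 → ℝ :=
  ![0, p 0, 0, p 1, 0, p 2, 0, p 3, 0]

theorem mrswme1Transverse_smul (c : ℝ) (p : Fin 4 → ℝ) :
    mrswme1Transverse (c • p) = c • mrswme1Transverse p := by
  ext i
  fin_cases i <;> simp [mrswme1Transverse]

theorem mulVec_mrswme1Transverse (A : Matrix (Fin 9) (Fin 9) ℝ) (p : Fin 4 → ℝ) (i : Fin 9) :
    (A *ᵥ mrswme1Transverse p) i = A i 1 * p 0 + A i 3 * p 1 + A i 5 * p 2 + A i 7 * p 3 := by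
  simp [mulVec, dotProduct, Fin.sum_univ_succ, mrswme1Transverse, add_assoc]

noncomputable def mrswme1AlfvenBlock (v b β η : ℝ) : Matrix (Fin 4) (Fin 4) ℝ :=
  !![v, -b, β / 3, -η / 3;
    -b, v, -η / 3, β / 3;
    β, -η, v, -b;
    -η, β, -b, v]

section

variable {g h u v a b α β γ η ε τ : ℝ}

theorem mrswme1AlfvenBlock_mulVec (hε : ε ^ 2 = 1) (hτ : τ ^ 2 = 3) :
    mrswme1AlfvenBlock v b β η *ᵥ ![1, ε, τ, ε * τ]
      = (v - ε * b + τ * (β - ε * η) / 3) • ![1, ε, τ, ε * τ] := by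
  ext i
  fin_cases i <;> simp [mrswme1AlfvenBlock, mulVec, dotProduct, Fin.sum_univ_succ] <;> grind

theorem mrswme1QuasilinearMatrix_row_four :
    (mrswme1QuasilinearMatrix g h u v a b α β γ η).row 4 = (v - β) • Pi.single 4 1 := by
  ext j
  fin_cases j <;> simp [mrswme1FluxJacobian, mrswme1GP, mrswme1Flux]

-- Along a transverse coordinate every flux component has a single non-constant term, which is
-- linear, so the derivative rules for constants and constant multiples suffice.
theorem mrswme1QuasilinearMatrix_mulVec_transverse (hh : h ≠ 0) (p : Fin 4 → ℝ) :
    mrswme1QuasilinearMatrix g h u v a b α β γ η *ᵥ mrswme1Transverse p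
      = mrswme1Transverse (mrswme1AlfvenBlock v b β η *ᵥ p) := by
  ext i
  rw [mulVec_mrswme1Transverse]
  fin_cases i <;>
    simp only [mrswme1Transverse, mrswme1AlfvenBlock, mulVec, dotProduct, Fin.sum_univ_four,
      mrswme1FluxJacobian, mrswme1Flux, mrswme1GP, Matrix.sub_apply, Matrix.of_apply,
      Function.update_apply, Fin.zero_eta, Fin.mk_one, Fin.reduceFinMk, Fin.reduceEq, if_true,
      if_false, cons_val] <;>
    simp -failIfUnchanged only [deriv_const_add, deriv_add_const, deriv_const_sub,
      deriv_sub_const, deriv_const_mul_field, deriv_mul_const_field, deriv_div_const,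
      deriv_const_mul_id, deriv_id'', deriv_const'] <;>
    field_simp <;> ring

theorem isRoot_charpoly_mrswme1QuasilinearMatrix_sub :
    (mrswme1QuasilinearMatrix g h u v a b α β γ η).charpoly.IsRoot (v - β) :=
  isRoot_charpoly_of_vecMul_eq_smul (w := Pi.single 4 1) (by simp)
    (by rw [single_one_vecMul, mrswme1QuasilinearMatrix_row_four])

theorem isRoot_charpoly_mrswme1QuasilinearMatrix_alfven (hh : h ≠ 0) (hε : ε ^ 2 = 1)
    (hτ : τ ^ 2 = 3) :
    (mrswme1QuasilinearMatrix g h u v a b α β γ η).charpoly.IsRoot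
      (v - ε * b + τ * (β - ε * η) / 3) := by
  refine isRoot_charpoly_of_mulVec_eq_smul (w := mrswme1Transverse ![1, ε, τ, ε * τ]) ?_ ?_
  · intro hw
    simpa [mrswme1Transverse] using congrFun hw 1
  · rw [mrswme1QuasilinearMatrix_mulVec_transverse hh, mrswme1AlfvenBlock_mulVec hε hτ,
      mrswme1Transverse_smul]

end

theorem mrswme1_closed_form_eigenvalues_general
    (g : ℝ) (h u v a b α β γ η : ℝ) (hh : 0 < h) :
    (Matrix.charpoly
        (mrswme1FluxJacobian g
            ![h, h * u, h * v, h * a, h * b, h * α, h * β, h * γ, h * η]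
          - mrswme1GP u v a b α β γ η)).IsRoot (v - β)
    ∧
    (Matrix.charpoly
        (mrswme1FluxJacobian g
            ![h, h * u, h * v, h * a, h * b, h * α, h * β, h * γ, h * η]
          - mrswme1GP u v a b α β γ η)).IsRoot
      (v - b + (β - η) / Real.sqrt 3)
    ∧
    (Matrix.charpoly
        (mrswme1FluxJacobian g
            ![h, h * u, h * v, h * a, h * b, h * α, h * β, h * γ, h * η]
          - mrswme1GP u v a b α β γ η)).IsRoot
      (v - b - (β - η) / Real.sqrt 3)
    ∧
    (Matrix.charpoly
        (mrswme1FluxJacobian g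
            ![h, h * u, h * v, h * a, h * b, h * α, h * β, h * γ, h * η]
          - mrswme1GP u v a b α β γ η)).IsRoot
      (v + b + (β + η) / Real.sqrt 3)
    ∧
    (Matrix.charpoly
        (mrswme1FluxJacobian g
            ![h, h * u, h * v, h * a, h * b, h * α, h * β, h * γ, h * η]
          - mrswme1GP u v a b α β γ η)).IsRoot
      (v + b - (β + η) / Real.sqrt 3) := by
  have hs : √3 ^ 2 = 3 := Real.sq_sqrt (by norm_num)
  have hdiv (x : ℝ) : x / √3 = √3 * x / 3 := by
    field_simp
    rw [hs]
  have alfven (ε τ : ℝ) (hε : ε ^ 2 = 1) (hτ : τ ^ 2 = 3) :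
      (mrswme1QuasilinearMatrix g h u v a b α β γ η).charpoly.IsRoot
        (v - ε * b + τ * (β - ε * η) / 3) :=
    isRoot_charpoly_mrswme1QuasilinearMatrix_alfven hh.ne' hε hτ
  refine ⟨isRoot_charpoly_mrswme1QuasilinearMatrix_sub, ?_, ?_, ?_, ?_⟩
  · convert alfven 1 √3 (one_pow 2) hs using 1
    rw [hdiv]; ring
  · convert alfven 1 (-√3) (one_pow 2) (by rw [neg_sq, hs]) using 1
    rw [hdiv]; ring
  · convert alfven (-1) √3 (by norm_num) hs using 1
    rw [hdiv]; ring
  · convert alfven (-1) (-√3) (by norm_num) (by rw [neg_sq, hs]) using 1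
    rw [hdiv]; ring

/-- For the first-order (M = 1) 1-D MRSW moment system with
Godunov–Powell source, the quasilinear matrix `J(U) = DG(U) − Q(U)` at the
state `U = (h, hu, hv, ha, hb, hα, hβ, hγ, hη)` admits the five closed-form
real eigenvalues `v − β`, `v − b ± (β−η)/√3`, `v + b ± (β+η)/√3`. -/
theorem mrswme1_closed_form_eigenvalues
    (g : ℝ) (hg : 0 < g) (h u v a b α β γ η : ℝ) (hh : 0 < h) :
    (Matrix.charpoly
        (mrswme1FluxJacobian g
            ![h, h * u, h * v, h * a, h * b, h * α, h * β, h * γ, h * η]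
          - mrswme1GP u v a b α β γ η)).IsRoot (v - β)
    ∧
    (Matrix.charpoly
        (mrswme1FluxJacobian g
            ![h, h * u, h * v, h * a, h * b, h * α, h * β, h * γ, h * η]
          - mrswme1GP u v a b α β γ η)).IsRoot
      (v - b + (β - η) / Real.sqrt 3)
    ∧
    (Matrix.charpoly
        (mrswme1FluxJacobian g
            ![h, h * u, h * v, h * a, h * b, h * α, h * β, h * γ, h * η]
          - mrswme1GP u v a b α β γ η)).IsRoot
      (v - b - (β - η) / Real.sqrt 3)
    ∧
    (Matrix.charpoly
        (mrswme1FluxJacobian g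
            ![h, h * u, h * v, h * a, h * b, h * α, h * β, h * γ, h * η]
          - mrswme1GP u v a b α β γ η)).IsRoot
      (v + b + (β + η) / Real.sqrt 3)
    ∧
    (Matrix.charpoly
        (mrswme1FluxJacobian g
            ![h, h * u, h * v, h * a, h * b, h * α, h * β, h * γ, h * η]
          - mrswme1GP u v a b α β γ η)).IsRoot
      (v + b - (β + η) / Real.sqrt 3) :=
  mrswme1_closed_form_eigenvalues_general g h u v a b α β γ η hh
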